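/- Let ν be a nonzero finite absolutely continuous Borel measure on 𝒬 = (0,1]^d with Lebesgue density f ∈ L^s(Λ) for some s ≥ 1. Then for all q ∈ [0,s] the L^q-spectrum exists as a limit and is linear: liminf_n β_{ν,n}(q) = β_ν(q) = d(1−q); moreover, for every r ≥ d/s − d and all q ∈ [0,s], τ_{J_{ν,r}}(q) = β_ν(q) − rq = d(1−q) − rq. -/

import Mathlib

open MeasureTheory Filter Set Metric
open scoped ENNReal NNReal Topology Classical

noncomputable section

/-- `ℝ^d`, modelled as `Fin d → ℝ` and carrying the maximum norm. -/
abbrev Ed (d : ℕ) := Fin d → ℝ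

/-- The half-open unit cube `𝒬 = (0,1]^d`. -/
def Qcube (d : ℕ) : Set (Ed d) := {x | ∀ i, x i ∈ Set.Ioc (0:ℝ) 1}

/-- The half-open dyadic cube of generation `n` with index `k ∈ ℤ^d`. -/
def dyadicCube (d n : ℕ) (k : Fin d → ℤ) : Set (Ed d) :=
  {x | ∀ i, x i ∈ Set.Ioc ((k i : ℝ) / 2 ^ n) (((k i : ℝ) + 1) / 2 ^ n)}

/-- The family `𝒟_n` of dyadic cubes of generation `n`, forming a partition of `𝒬`. -/
def Dn (d n : ℕ) : Set (Set (Ed d)) :=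
  {S | ∃ k : Fin d → ℤ, (∀ i, 0 ≤ k i ∧ k i < 2 ^ n) ∧ S = dyadicCube d n k}

/-- All dyadic cubes `𝒟 = ⋃_n 𝒟_n` (inside `𝒬`). -/
def Ddy (d : ℕ) : Set (Set (Ed d)) := ⋃ n, Dn d n

/-- All dyadic cubes of generation `n` in `ℝ^d`. -/
def DnAll (d n : ℕ) : Set (Set (Ed d)) := {S | ∃ k : Fin d → ℤ, S = dyadicCube d n k}

/-- Index set enumerating the cubes of `𝒟_n`. -/
def idx (d n : ℕ) : Finset (Fin d → ℤ) :=
  Fintype.piFinset fun _ => Finset.Icc 0 (2 ^ n - 1)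

/-- Lebesgue measure restricted to `𝒬`. -/
def Lam (d : ℕ) : Measure (Ed d) := volume.restrict (Qcube d)

/-- `dim_∞(ν) = liminf_n max_{Q ∈ 𝒟_n} log ν(Q) / log 2^{-n}`. -/
def dimInfty (d : ℕ) (ν : Measure (Ed d)) : ℝ :=
  liminf (fun n : ℕ =>
    (⨆ k ∈ idx d n, Real.log (ν (dyadicCube d n k)).toReal) / (-(n : ℝ) * Real.log 2)) atTop

/-- The set function `J_{ν,r}(Q) = max_{Q' ∈ 𝒟(Q)} ν(Q') Λ(Q')^{r/d}`. -/
def Jf (d : ℕ) (ν : Measure (Ed d)) (r : ℝ) (Q : Set (Ed d)) : ℝ :=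
  sSup {v : ℝ | ∃ Q' ∈ Ddy d, Q' ⊆ Q ∧ v = (ν Q').toReal * (Lam d Q').toReal ^ (r / (d:ℝ))}

/-- The `n`-th level `J`-partition sum exponent `τ_{J,n}(q)`. -/
def tauN (d : ℕ) (ν : Measure (Ed d)) (r q : ℝ) (n : ℕ) : ℝ :=
  Real.log (∑ k ∈ (idx d n).filter (fun k => 0 < Jf d ν r (dyadicCube d n k)),
    Jf d ν r (dyadicCube d n k) ^ q) / ((n : ℝ) * Real.log 2)

/-- The `J`-partition function `τ_{J_{ν,r}}(q)`. -/
def tauJ (d : ℕ) (ν : Measure (Ed d)) (r q : ℝ) : ℝ :=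
  limsup (tauN d ν r q) atTop

/-- The critical value `q_r = inf{q > 0 : τ_{J_{ν,r}}(q) < 0}`. -/
def qrCrit (d : ℕ) (ν : Measure (Ed d)) (r : ℝ) : ℝ :=
  sInf {q : ℝ | 0 < q ∧ tauJ d ν r q < 0}

/-- The `n`-th level `L^q`-sum exponent `β_{ν,n}(q)`. -/
def betaN (d : ℕ) (ν : Measure (Ed d)) (q : ℝ) (n : ℕ) : ℝ :=
  Real.log (∑ k ∈ (idx d n).filter (fun k => 0 < ν (dyadicCube d n k)),
    ((ν (dyadicCube d n k)).toReal) ^ q) / ((n : ℝ) * Real.log 2)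

/-- The `L^q`-spectrum `β_ν(q)`. -/
def betaNu (d : ℕ) (ν : Measure (Ed d)) (q : ℝ) : ℝ := limsup (betaN d ν q) atTop

/-- Upper Minkowski (box-counting) dimension of the support of `ν`, computed through the
number of dyadic cubes of positive measure. -/
def dimMUpper (d : ℕ) (ν : Measure (Ed d)) : ℝ :=
  limsup (fun n : ℕ =>
    Real.log (((idx d n).filter fun k => 0 < ν (dyadicCube d n k)).card) /
      ((n : ℝ) * Real.log 2)) atTop

/-- `log⁺`. -/
def logPlus (x : ℝ) : ℝ := Real.log (max x 1)

/-- `N_{ν,α,r}(n) = card{Q ∈ 𝒟_n : J_{ν,r}(Q) ≥ 2^{-αn}}`. -/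
def Ncount (d : ℕ) (ν : Measure (Ed d)) (α r : ℝ) (n : ℕ) : ℕ :=
  ((idx d n).filter fun k => (2:ℝ) ^ (-(α * (n:ℝ))) ≤ Jf d ν r (dyadicCube d n k)).card

/-- `F̄_{ν,r}(α)`. -/
def FUpperAt (d : ℕ) (ν : Measure (Ed d)) (r α : ℝ) : ℝ :=
  limsup (fun n : ℕ => logPlus (Ncount d ν α r n) / ((n : ℝ) * Real.log 2)) atTop

/-- `F̲_{ν,r}(α)`. -/
def FLowerAt (d : ℕ) (ν : Measure (Ed d)) (r α : ℝ) : ℝ :=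
  liminf (fun n : ℕ => logPlus (Ncount d ν α r n) / ((n : ℝ) * Real.log 2)) atTop

/-- The upper optimized coarse multifractal dimension `F̄_r = sup_{α>0} F̄_{ν,r}(α)/α`. -/
def FUpper (d : ℕ) (ν : Measure (Ed d)) (r : ℝ) : ℝ :=
  sSup {v : ℝ | ∃ α : ℝ, 0 < α ∧ v = FUpperAt d ν r α / α}

/-- The lower optimized coarse multifractal dimension `F̲_r = sup_{α>0} F̲_{ν,r}(α)/α`. -/
def FLower (d : ℕ) (ν : Measure (Ed d)) (r : ℝ) : ℝ :=
  sSup {v : ℝ | ∃ α : ℝ, 0 < α ∧ v = FLowerAt d ν r α / α}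

/-- A finite partition of `𝒬` by dyadic cubes. -/
def IsDyadicPartition (d : ℕ) (P : Finset (Set (Ed d))) : Prop :=
  (∀ Q ∈ P, Q ∈ Ddy d) ∧ (P : Set (Set (Ed d))).PairwiseDisjoint id ∧
    ⋃₀ (P : Set (Set (Ed d))) = Qcube d

/-- `M_{ν,r}(x) = inf{card P : P ∈ Π, max_{Q ∈ P} J_{ν,r}(Q) < 1/x}`. -/
def Mx (d : ℕ) (ν : Measure (Ed d)) (r x : ℝ) : ℕ :=
  sInf {m : ℕ | ∃ P : Finset (Set (Ed d)), IsDyadicPartition d P ∧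
    (∀ Q ∈ P, Jf d ν r Q < 1 / x) ∧ P.card = m}

/-- The upper `(ν,r)`-partition entropy `h̄_{ν,r}`. -/
def hUpper (d : ℕ) (ν : Measure (Ed d)) (r : ℝ) : ℝ :=
  limsup (fun x : ℝ => Real.log (Mx d ν r x) / Real.log x) atTop

/-- The lower `(ν,r)`-partition entropy `h̲_{ν,r}`. -/
def hLowerBase (d : ℕ) (ν : Measure (Ed d)) (r : ℝ) : ℝ :=
  liminf (fun x : ℝ => Real.log (Mx d ν r x) / Real.log x) atTop

/-- `h̲_r = lim_{ε ↓ 0} h̲_{ν,r-ε}`. -/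
def hLowerLim (d : ℕ) (ν : Measure (Ed d)) (r : ℝ) : ℝ :=
  limUnder (𝓝[>] (0:ℝ)) (fun ε => hLowerBase d ν (r - ε))

/-- The value `(∫ d(x,A)^r dν)^{1/r}` (resp. `exp ∫ log d(x,A) dν` for `r = 0`) of the
quantization functional at the codebook `A`; computed in `[0,∞]` so that for `r < 0` a
non-integrable integrand gives the value `0`. -/
def eVal (d : ℕ) (ν : Measure (Ed d)) (A : Finset (Ed d)) (r : ℝ) : ℝ :=
  if r = 0 then Real.exp (∫ x, Real.log (infDist x (A : Set (Ed d))) ∂ν)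
  else ((∫⁻ x, ENNReal.ofReal (infDist x (A : Set (Ed d))) ^ r ∂ν) ^ (1 / r)).toReal

/-- The `n`-th quantization error `e_{n,r}(ν)` of order `r`. -/
def qerr (d : ℕ) (ν : Measure (Ed d)) (n : ℕ) (r : ℝ) : ℝ :=
  sInf {e : ℝ | ∃ A : Finset (Ed d), A.Nonempty ∧ A.card ≤ n ∧ e = eVal d ν A r}

/-- The upper quantization dimension `D̄_r(ν)` (with the convention `1/log 0 = 0`,
realized by `Real.log 0 = 0`). -/
def upperD (d : ℕ) (ν : Measure (Ed d)) (r : ℝ) : ℝ :=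
  limsup (fun n : ℕ => Real.log n / (- Real.log (qerr d ν n r))) atTop

/-- The lower quantization dimension `D̲_r(ν)`. -/
def lowerD (d : ℕ) (ν : Measure (Ed d)) (r : ℝ) : ℝ :=
  liminf (fun n : ℕ => Real.log n / (- Real.log (qerr d ν n r))) atTop

/-- The sequence `n^{1/κ} e_{n,r}(ν)`, viewed in `[0,∞]`. -/
def qcoefSeq (d : ℕ) (ν : Measure (Ed d)) (κ r : ℝ) (n : ℕ) : ℝ≥0∞ :=
  ENNReal.ofReal ((n : ℝ) ^ (1 / κ) * qerr d ν n r)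

/-- The `κ`-dimensional quantization coefficient of order `r` exists and equals `c`. -/
def HasQCoef (d : ℕ) (ν : Measure (Ed d)) (κ r : ℝ) (c : ℝ≥0∞) : Prop :=
  Tendsto (qcoefSeq d ν κ r) atTop (𝓝 c)

/-- The `κ`-dimensional quantization coefficient of order `r` (junk value if the limit
does not exist). -/
def qcoef (d : ℕ) (ν : Measure (Ed d)) (κ r : ℝ) : ℝ≥0∞ :=
  limUnder atTop (qcoefSeq d ν κ r)

/-- `s_h = sup{s > 0 : ‖h‖_{L^s(Λ)} < ∞}`. -/
def sCrit (d : ℕ) (h : Ed d → ℝ≥0∞) : ℝ :=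
  sSup {s : ℝ | 0 < s ∧ ∫⁻ x in Qcube d, h x ^ s < ⊤}

/-- `Φ_r(h)`. -/
def Phi (d : ℕ) (r : ℝ) (h : Ed d → ℝ≥0∞) : ℝ :=
  if r ≤ -(d:ℝ) then 0
  else if r = 0 then
    Real.exp (-(1/(d:ℝ)) * ∫ x in Qcube d, (h x).toReal * Real.log (h x).toReal)
  else ((∫⁻ x in Qcube d, h x ^ ((d:ℝ)/((d:ℝ)+r))) ^ (((d:ℝ)+r)/(d:ℝ) * (1/r))).toReal

/-- `a_ν = sup{q_r : r ∈ (-dim_∞(ν),0)}`, computed in `[0,∞]`. -/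
def aNu (d : ℕ) (ν : Measure (Ed d)) : ℝ≥0∞ :=
  ⨆ r ∈ Set.Ioo (-(dimInfty d ν)) (0:ℝ), ENNReal.ofReal (qrCrit d ν r)

/-- `ν` is multifractal-regular at `r`. -/
def MFregular (d : ℕ) (ν : Measure (Ed d)) (r : ℝ) : Prop :=
  FLower d ν r = FUpper d ν r

/-- `ν` is partition function regular at `r`. -/
def PFregular (d : ℕ) (ν : Measure (Ed d)) (r : ℝ) : Prop :=
  (∃ ε > 0, ∀ q ∈ Set.Ioo (qrCrit d ν r - ε) (qrCrit d ν r),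
      Tendsto (tauN d ν r q) atTop (𝓝 (tauJ d ν r q))) ∨
  (Tendsto (tauN d ν r (qrCrit d ν r)) atTop (𝓝 (tauJ d ν r (qrCrit d ν r))) ∧
      DifferentiableAt ℝ (tauJ d ν r) (qrCrit d ν r))

/-- Distance between two sets. -/
def setDist (d : ℕ) (S T : Set (Ed d)) : ℝ :=
  sInf {v : ℝ | ∃ x ∈ S, ∃ y ∈ T, v = dist x y}

/-- The `2^{-n+1}`-parallel set `B_n(Q̃)` of a dyadic cube `Q̃`. -/
def parSet (d n : ℕ) (Qt : Set (Ed d)) : Set (Ed d) :=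
  ⋃ Q ∈ {Q ∈ DnAll d (n-1) | (closure Qt ∩ closure Q).Nonempty}, Q

/-- `V_{n,r}(μ) = sup_A ∫ d(x,A)^r dμ` for `r < 0`, computed in `[0,∞]`. -/
def Vnr (d : ℕ) (μ : Measure (Ed d)) (n : ℕ) (r : ℝ) : ℝ≥0∞ :=
  ⨆ (A : Finset (Ed d)) (_ : A.Nonempty ∧ A.card ≤ n),
    ∫⁻ x, ENNReal.ofReal (infDist x (A : Set (Ed d))) ^ r ∂μ

/-! Hölder's inequality on a dyadic cube `Q` of generation `n` gives
`ν(Q) ≤ (∫_Q f^s)^{1/s} Λ(Q)^{1-1/s}`; raising to the power `q ≤ s` and summing with the concavity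
of `t ↦ t^{q/s}` bounds the `L^q` partition sum by `C 2^{nd(1-q)}`. The matching lower bound
`c 2^{nd(1-q)}` comes from the power-mean inequality for `q ≥ 1`, from the reverse Hölder
inequality `∫_Q f^q ≤ ν(Q)^q Λ(Q)^{1-q}` for `0 < q < 1`, and from counting the cubes meeting
`{f ≠ 0}` for `q = 0`. Hence `β_{ν,n}(q) → d(1-q)`.

For `r ≥ d/s - d` the exponent `1 - 1/s + r/d` is nonnegative, so the same Hölder bound on a subcube
`Q' ⊆ Q` is dominated by the one on `Q`: the `J`-partition sums obey the upper bound above times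
`2^{-nrq}`, while `J_{ν,r}(Q) ≥ ν(Q) Λ(Q)^{r/d}` gives the lower bound times `2^{-nrq}`. -/

section DyadicCubes

variable {d : ℕ}

lemma mem_dyadicCube_iff {n : ℕ} {k : Fin d → ℤ} {x : Ed d} :
    x ∈ dyadicCube d n k ↔ ∀ i, ⌈x i * 2 ^ n⌉ = k i + 1 := by
  have h2n : (0 : ℝ) < 2 ^ n := by positivity
  refine forall_congr' fun i => ?_
  rw [Int.ceil_eq_iff, mem_Ioc, div_lt_iff₀ h2n, le_div_iff₀ h2n]
  push_cast
  constructor <;> rintro ⟨h1, h2⟩ <;> constructor <;> linarith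

lemma mem_idx_iff {n : ℕ} {k : Fin d → ℤ} : k ∈ idx d n ↔ ∀ i, 0 ≤ k i ∧ k i < 2 ^ n := by
  simp [idx]

lemma card_idx (n : ℕ) : (idx d n).card = (2 ^ n) ^ d := by
  simp [idx, Int.card_Icc, Int.toNat_pow_of_nonneg]

lemma dyadicCube_eq_pi (n : ℕ) (k : Fin d → ℤ) :
    dyadicCube d n k = univ.pi fun i => Ioc ((k i : ℝ) / 2 ^ n) ((k i + 1) / 2 ^ n) := by
  ext x; simp [dyadicCube]

lemma measurableSet_dyadicCube (n : ℕ) (k : Fin d → ℤ) : MeasurableSet (dyadicCube d n k) := by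
  rw [dyadicCube_eq_pi]
  exact .univ_pi fun _ => measurableSet_Ioc

lemma Qcube_eq_pi : Qcube d = univ.pi fun _ => Ioc (0 : ℝ) 1 := by
  ext x; simp [Qcube]

lemma measurableSet_Qcube : MeasurableSet (Qcube d) := by
  rw [Qcube_eq_pi]
  exact .univ_pi fun _ => measurableSet_Ioc

lemma volume_dyadicCube (n : ℕ) (k : Fin d → ℤ) :
    volume (dyadicCube d n k) = ENNReal.ofReal (((2 : ℝ) ^ n) ^ (-(d : ℝ))) := by
  rw [dyadicCube_eq_pi, volume_pi_pi]
  simp_rw [Real.volume_Ioc, show ∀ a : ℝ, (a + 1) / 2 ^ n - a / 2 ^ n = ((2 : ℝ) ^ n)⁻¹ from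
    fun a => by ring]
  rw [Finset.prod_const, Finset.card_univ, Fintype.card_fin, ← ENNReal.ofReal_pow (by positivity),
    Real.rpow_neg (by positivity), Real.rpow_natCast, inv_pow]

lemma pairwiseDisjoint_dyadicCube (n : ℕ) :
    (univ : Set (Fin d → ℤ)).PairwiseDisjoint (dyadicCube d n) := by
  refine fun k _ k' _ hkk' => disjoint_left.2 fun x hx hx' => hkk' (funext fun i => ?_)
  have := (mem_dyadicCube_iff.1 hx i).symm.trans (mem_dyadicCube_iff.1 hx' i)
  omega

lemma biUnion_idx_dyadicCube (n : ℕ) : ⋃ k ∈ idx d n, dyadicCube d n k = Qcube d := by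
  refine subset_antisymm (iUnion₂_subset fun k hk x hx i => ?_) fun x hx => ?_
  · obtain ⟨h1, h2⟩ := hx i
    obtain ⟨hk1, hk2⟩ := mem_idx_iff.1 hk i
    have h2n : (0 : ℝ) < 2 ^ n := by positivity
    have hk1' : (0 : ℝ) ≤ k i := by exact_mod_cast hk1
    have hk2' : (k i : ℝ) + 1 ≤ 2 ^ n := by exact_mod_cast hk2
    exact ⟨(div_nonneg hk1' h2n.le).trans_lt h1, h2.trans ((div_le_one h2n).2 hk2')⟩
  · refine mem_iUnion₂.2 ⟨fun i => ⌈x i * 2 ^ n⌉ - 1, mem_idx_iff.2 fun i => ?_,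
      mem_dyadicCube_iff.2 fun i => by ring⟩
    obtain ⟨h1, h2⟩ := hx i
    have hpos : 0 < ⌈x i * 2 ^ n⌉ := Int.ceil_pos.2 (by positivity)
    have hle : ⌈x i * 2 ^ n⌉ ≤ 2 ^ n :=
      Int.ceil_le.2 (by push_cast; exact mul_le_of_le_one_left (by positivity) h2)
    omega

lemma dyadicCube_subset_Qcube {n : ℕ} {k : Fin d → ℤ} (hk : k ∈ idx d n) :
    dyadicCube d n k ⊆ Qcube d :=
  (subset_biUnion_of_mem hk).trans (biUnion_idx_dyadicCube n).subset

lemma sum_measure_dyadicCube (μ : Measure (Ed d)) (n : ℕ) :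
    ∑ k ∈ idx d n, μ (dyadicCube d n k) = μ (Qcube d) := by
  rw [← biUnion_idx_dyadicCube n, measure_biUnion_finset
    ((pairwiseDisjoint_dyadicCube n).subset (subset_univ _))
    fun k _ => measurableSet_dyadicCube n k]

lemma mem_Ddy_iff {S : Set (Ed d)} : S ∈ Ddy d ↔ ∃ m, ∃ k ∈ idx d m, S = dyadicCube d m k := by
  simp [Ddy, Dn, mem_idx_iff]

lemma sum_toReal_measure_dyadicCube (μ : Measure (Ed d)) (hμ : μ (Qcube d) ≠ ⊤) (n : ℕ) :
    ∑ k ∈ idx d n, (μ (dyadicCube d n k)).toReal = (μ (Qcube d)).toReal := by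
  rw [← sum_measure_dyadicCube μ n, ENNReal.toReal_sum fun k hk =>
    ne_top_of_le_ne_top hμ (measure_mono (dyadicCube_subset_Qcube hk))]

lemma card_idx_eq_rpow (n : ℕ) : ((idx d n).card : ℝ) = ((2 : ℝ) ^ n) ^ (d : ℝ) := by
  rw [card_idx, Real.rpow_natCast]
  push_cast
  rfl

end DyadicCubes

section Lebesgue

variable {d : ℕ}

instance : IsProbabilityMeasure (Lam d) :=
  ⟨by simp [Lam, Qcube_eq_pi, volume_pi_pi]⟩

lemma Lam_dyadicCube {n : ℕ} {k : Fin d → ℤ} (hk : k ∈ idx d n) :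
    Lam d (dyadicCube d n k) = ENNReal.ofReal (((2 : ℝ) ^ n) ^ (-(d : ℝ))) := by
  rw [Lam, Measure.restrict_apply (measurableSet_dyadicCube n k),
    inter_eq_left.2 (dyadicCube_subset_Qcube hk), volume_dyadicCube]

lemma toReal_Lam_dyadicCube {n : ℕ} {k : Fin d → ℤ} (hk : k ∈ idx d n) :
    (Lam d (dyadicCube d n k)).toReal = ((2 : ℝ) ^ n) ^ (-(d : ℝ)) := by
  rw [Lam_dyadicCube hk, ENNReal.toReal_ofReal (by positivity)]

lemma measure_Qcube_of_absolutelyContinuous {μ : Measure (Ed d)} (h : μ ≪ Lam d) :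
    μ (Qcube d) = μ univ := by
  have : μ (Qcube d)ᶜ = 0 := h (by simp [Lam, Measure.restrict_apply' measurableSet_Qcube])
  rw [← measure_add_measure_compl measurableSet_Qcube, this, add_zero]

end Lebesgue

section Holder

variable {α : Type*} [MeasurableSpace α] {μ : Measure α} {g : α → ℝ≥0∞}

lemma withDensity_apply_le_rpow_mul [SFinite μ] (hg : AEMeasurable g μ) {p : ℝ} (hp : 1 ≤ p)
    (A : Set α) :
    μ.withDensity g A ≤ μ.withDensity (fun x => g x ^ p) A ^ (1 / p) * μ A ^ (1 - 1 / p) := by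
  have := eLpNorm'_le_eLpNorm'_mul_rpow_measure_univ one_pos hp
    (hg.restrict (s := A)).aestronglyMeasurable
  simpa [eLpNorm'_eq_lintegral_enorm, withDensity_apply'] using this

lemma withDensity_rpow_apply_le [SFinite μ] (hg : AEMeasurable g μ) {q : ℝ} (hq0 : 0 < q)
    (hq1 : q ≤ 1) (A : Set α) :
    μ.withDensity (fun x => g x ^ q) A ≤ μ.withDensity g A ^ q * μ A ^ (1 - q) := by
  have h := eLpNorm'_le_eLpNorm'_mul_rpow_measure_univ hq0 hq1
    (hg.restrict (s := A)).aestronglyMeasurable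
  simp only [eLpNorm'_eq_lintegral_enorm, enorm_eq_self, ENNReal.rpow_one, div_one,
    Measure.restrict_apply_univ] at h
  calc μ.withDensity (fun x => g x ^ q) A = ((∫⁻ x in A, g x ^ q ∂μ) ^ (1 / q)) ^ q := by
        rw [← ENNReal.rpow_mul, one_div_mul_cancel hq0.ne', ENNReal.rpow_one, withDensity_apply']
    _ ≤ ((∫⁻ x in A, g x ∂μ) * μ A ^ (1 / q - 1)) ^ q := by gcongr
    _ = _ := by
        rw [ENNReal.mul_rpow_of_nonneg _ _ hq0.le, ← ENNReal.rpow_mul, sub_mul,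
          one_div_mul_cancel hq0.ne', one_mul, withDensity_apply']

lemma ENNReal.toReal_le_rpow_mul_rpow {x y z : ℝ≥0∞} {a b : ℝ} (ha : 0 ≤ a) (hb : 0 ≤ b)
    (hy : y ≠ ⊤) (hz : z ≠ ⊤) (h : x ≤ y ^ a * z ^ b) :
    x.toReal ≤ y.toReal ^ a * z.toReal ^ b := by
  have := ENNReal.toReal_mono (ENNReal.mul_ne_top (ENNReal.rpow_ne_top_of_nonneg ha hy)
    (ENNReal.rpow_ne_top_of_nonneg hb hz)) h
  rwa [ENNReal.toReal_mul, ← ENNReal.toReal_rpow, ← ENNReal.toReal_rpow] at this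

lemma withDensity_apply_ne_top_of_lintegral_ne_top [SFinite μ] (hg : ∫⁻ x, g x ∂μ ≠ ⊤) (A : Set α) :
    μ.withDensity g A ≠ ⊤ := by
  refine ne_top_of_le_ne_top ?_ (measure_mono (subset_univ A))
  rwa [withDensity_apply' _ univ, Measure.restrict_univ]

variable [IsFiniteMeasure μ]

lemma toReal_withDensity_apply_le (hg : AEMeasurable g μ) {p : ℝ} (hp : 1 ≤ p)
    (hgp : ∫⁻ x, g x ^ p ∂μ ≠ ⊤) (A : Set α) :
    (μ.withDensity g A).toReal
      ≤ (μ.withDensity (fun x => g x ^ p) A).toReal ^ (1 / p) * (μ A).toReal ^ (1 - 1 / p) :=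
  ENNReal.toReal_le_rpow_mul_rpow (by positivity)
    (sub_nonneg.2 (div_le_one_of_le₀ hp (by linarith)))
    (withDensity_apply_ne_top_of_lintegral_ne_top hgp A) (measure_ne_top μ A)
    (withDensity_apply_le_rpow_mul hg hp A)

lemma lintegral_rpow_ne_top_of_le (hg : AEMeasurable g μ) {p p' : ℝ} (hp : 0 < p) (hpp' : p ≤ p')
    (h : ∫⁻ x, g x ^ p' ∂μ ≠ ⊤) : ∫⁻ x, g x ^ p ∂μ ≠ ⊤ := by
  have := eLpNorm'_le_eLpNorm'_mul_rpow_measure_univ hp hpp' hg.aestronglyMeasurable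
  simp only [eLpNorm'_eq_lintegral_enorm, enorm_eq_self] at this
  have hfin := ne_top_of_le_ne_top (ENNReal.mul_ne_top
    (ENNReal.rpow_ne_top_of_nonneg (one_div_nonneg.2 (hp.le.trans hpp')) h)
      (ENNReal.rpow_ne_top_of_nonneg
      (sub_nonneg.2 (one_div_le_one_div_of_le hp hpp')) (measure_ne_top μ univ))) this
  exact ((ENNReal.rpow_lt_top_iff_of_pos (by positivity)).1 hfin.lt_top).ne

lemma toReal_withDensity_rpow_apply_le (hg : AEMeasurable g μ) {q : ℝ} (hq0 : 0 < q)
    (hq1 : q ≤ 1) {A : Set α} (hA : μ.withDensity g A ≠ ⊤) :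
    (μ.withDensity (fun x => g x ^ q) A).toReal
      ≤ (μ.withDensity g A).toReal ^ q * (μ A).toReal ^ (1 - q) :=
  ENNReal.toReal_le_rpow_mul_rpow hq0.le (by linarith) hA (measure_ne_top μ A)
    (withDensity_rpow_apply_le hg hq0 hq1 A)

end Holder

section PowerMean

variable {ι : Type*} {F : Finset ι} {a b : ι → ℝ}

lemma sum_rpow_le_card_rpow_mul_rpow_sum (ha : ∀ i ∈ F, 0 ≤ a i) {t : ℝ} (ht0 : 0 ≤ t)
    (ht1 : t ≤ 1) : ∑ i ∈ F, a i ^ t ≤ (F.card : ℝ) ^ (1 - t) * (∑ i ∈ F, a i) ^ t := by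
  rcases F.eq_empty_or_nonempty with rfl | hF
  · simp only [Finset.sum_empty]
    positivity
  have hN : (0 : ℝ) < F.card := by exact_mod_cast hF.card_pos
  have h := (Real.concaveOn_rpow ht0 ht1).le_map_sum (t := F) (w := fun _ => (F.card : ℝ)⁻¹)
    (p := a) (fun _ _ => by positivity) (by simp [hN.ne']) ha
  simp only [smul_eq_mul, ← Finset.mul_sum] at h
  rw [Real.mul_rpow (by positivity) (Finset.sum_nonneg ha), Real.inv_rpow hN.le,
    inv_mul_le_iff₀ hN] at h
  rwa [Real.rpow_sub hN, Real.rpow_one, div_mul_eq_mul_div, mul_div_assoc, div_eq_inv_mul]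

lemma sum_rpow_le_of_le_rpow_mul {s q x : ℝ} (hs : 0 < s) (hq0 : 0 ≤ q) (hqs : q ≤ s)
    (hx : 0 ≤ x) (ha : ∀ i ∈ F, 0 ≤ a i) (hb : ∀ i ∈ F, 0 ≤ b i)
    (hab : ∀ i ∈ F, a i ≤ b i ^ (1 / s) * x) :
    ∑ i ∈ F, a i ^ q ≤ (F.card : ℝ) ^ (1 - q / s) * (∑ i ∈ F, b i) ^ (q / s) * x ^ q := by
  calc ∑ i ∈ F, a i ^ q ≤ ∑ i ∈ F, b i ^ (q / s) * x ^ q := Finset.sum_le_sum fun i hi => by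
        calc a i ^ q ≤ (b i ^ (1 / s) * x) ^ q := Real.rpow_le_rpow (ha i hi) (hab i hi) hq0
          _ = b i ^ (q / s) * x ^ q := by
            rw [Real.mul_rpow (Real.rpow_nonneg (hb i hi) _) hx, ← Real.rpow_mul (hb i hi),
              one_div_mul_eq_div]
    _ = (∑ i ∈ F, b i ^ (q / s)) * x ^ q := by rw [Finset.sum_mul]
    _ ≤ _ := by
        gcongr
        exact sum_rpow_le_card_rpow_mul_rpow_sum hb (by positivity) ((div_le_one hs).2 hqs)

end PowerMean

lemma tendsto_log_div_log_of_le_of_le {ι : Type*} {l : Filter ι} {S x : ι → ℝ} {e c C : ℝ}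
    (hx : Tendsto x l atTop) (hc : 0 < c) (hlow : ∀ᶠ i in l, c * x i ^ e ≤ S i)
    (hup : ∀ᶠ i in l, S i ≤ C * x i ^ e) :
    Tendsto (fun i => Real.log (S i) / Real.log (x i)) l (𝓝 e) := by
  have hlog := Real.tendsto_log_atTop.comp hx
  have hlim (K : ℝ) : Tendsto (fun i => e + K / Real.log (x i)) l (𝓝 e) := by
    simpa using tendsto_const_nhds.add (tendsto_const_nhds.div_atTop hlog)
  have hsqueeze : ∀ᶠ i in l, e + Real.log c / Real.log (x i) ≤ Real.log (S i) / Real.log (x i)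
      ∧ Real.log (S i) / Real.log (x i) ≤ e + Real.log C / Real.log (x i) := by
    filter_upwards [hlow, hup, hx.eventually_gt_atTop 1] with i hlow hup hx1
    have hx0 : 0 < x i := one_pos.trans hx1
    have hL : 0 < Real.log (x i) := Real.log_pos hx1
    have hS : 0 < S i := (by positivity : 0 < c * x i ^ e).trans_le hlow
    have hC : 0 < C := pos_of_mul_pos_left (hS.trans_le hup) (by positivity)
    simp only [add_div' _ _ _ hL.ne', div_le_div_iff_of_pos_right hL]
    constructor
    · calc e * Real.log (x i) + Real.log c = Real.log (c * x i ^ e) := by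
            rw [Real.log_mul hc.ne' (by positivity), Real.log_rpow hx0]; ring
        _ ≤ Real.log (S i) := Real.log_le_log (by positivity) hlow
    · calc Real.log (S i) ≤ Real.log (C * x i ^ e) := Real.log_le_log hS hup
        _ = e * Real.log (x i) + Real.log C := by
            rw [Real.log_mul hC.ne' (by positivity), Real.log_rpow hx0]; ring
  exact tendsto_of_tendsto_of_tendsto_of_le_of_le' (hlim _) (hlim _)
    (hsqueeze.mono fun _ => And.left) (hsqueeze.mono fun _ => And.right)

section PartitionSums

variable {d : ℕ}

def lqPartitionSum (d : ℕ) (ν : Measure (Ed d)) (q : ℝ) (n : ℕ) : ℝ :=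
  ∑ k ∈ (idx d n).filter (fun k => 0 < ν (dyadicCube d n k)), (ν (dyadicCube d n k)).toReal ^ q

def jPartitionSum (d : ℕ) (ν : Measure (Ed d)) (r q : ℝ) (n : ℕ) : ℝ :=
  ∑ k ∈ (idx d n).filter (fun k => 0 < Jf d ν r (dyadicCube d n k)),
    Jf d ν r (dyadicCube d n k) ^ q

lemma betaN_eq (ν : Measure (Ed d)) (q : ℝ) (n : ℕ) :
    betaN d ν q n = Real.log (lqPartitionSum d ν q n) / Real.log (2 ^ n) := by
  rw [Real.log_pow]
  rfl

lemma tauN_eq (ν : Measure (Ed d)) (r q : ℝ) (n : ℕ) :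
    tauN d ν r q n = Real.log (jPartitionSum d ν r q n) / Real.log (2 ^ n) := by
  rw [Real.log_pow]
  rfl

lemma lqPartitionSum_eq_sum (ν : Measure (Ed d)) {q : ℝ} (hq : 0 < q) (n : ℕ) :
    lqPartitionSum d ν q n = ∑ k ∈ idx d n, (ν (dyadicCube d n k)).toReal ^ q :=
  Finset.sum_filter_of_ne fun _ _ h => pos_iff_ne_zero.2 fun h0 =>
    h (by rw [h0, ENNReal.toReal_zero, Real.zero_rpow hq.ne'])

lemma rpow_mul_le_lqPartitionSum {ν : Measure (Ed d)} (hν : ν (Qcube d) ≠ ⊤) {q : ℝ}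
    (hq : 1 ≤ q) (n : ℕ) :
    (ν (Qcube d)).toReal ^ q * ((2 : ℝ) ^ n) ^ (d * (1 - q)) ≤ lqPartitionSum d ν q n := by
  have h := Real.rpow_sum_le_const_mul_sum_rpow_of_nonneg (s := idx d n)
    (f := fun k => (ν (dyadicCube d n k)).toReal) hq fun _ _ => ENNReal.toReal_nonneg
  rw [sum_toReal_measure_dyadicCube ν hν, card_idx_eq_rpow, ← Real.rpow_mul (by positivity)] at h
  rw [lqPartitionSum_eq_sum ν (by linarith)]
  calc _ ≤ ((2 : ℝ) ^ n) ^ (d * (q - 1)) * (∑ k ∈ idx d n, (ν (dyadicCube d n k)).toReal ^ q)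
        * ((2 : ℝ) ^ n) ^ (d * (1 - q)) := by gcongr
    _ = _ := by
      rw [mul_right_comm, ← Real.rpow_add (by positivity), show (d : ℝ) * (q - 1) + d * (1 - q) = 0
        by ring, Real.rpow_zero, one_mul]

lemma sum_rpow_le_of_le_rpow_mul_Lam_rpow (μ : Measure (Ed d)) (hμ : μ (Qcube d) ≠ ⊤) {s q e : ℝ}
    (hs : 0 < s) (hq0 : 0 ≤ q) (hqs : q ≤ s) {n : ℕ} {a : (Fin d → ℤ) → ℝ}
    (ha : ∀ k ∈ idx d n, 0 ≤ a k)
    (hab : ∀ k ∈ idx d n,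
      a k ≤ (μ (dyadicCube d n k)).toReal ^ (1 / s) * (Lam d (dyadicCube d n k)).toReal ^ e) :
    ∑ k ∈ idx d n, a k ^ q
      ≤ (μ (Qcube d)).toReal ^ (q / s) * ((2 : ℝ) ^ n) ^ (d * (1 - q / s - e * q)) := by
  have h2n : (0 : ℝ) < 2 ^ n := by positivity
  have h := sum_rpow_le_of_le_rpow_mul hs hq0 hqs (Real.rpow_nonneg h2n.le (-(d * e))) ha
    (fun _ _ => ENNReal.toReal_nonneg) fun k hk => by
      simpa only [toReal_Lam_dyadicCube hk, ← Real.rpow_mul h2n.le, neg_mul] using hab k hk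
  rw [card_idx_eq_rpow, sum_toReal_measure_dyadicCube μ hμ, ← Real.rpow_mul h2n.le,
    ← Real.rpow_mul h2n.le, mul_right_comm, ← Real.rpow_add h2n] at h
  refine h.trans_eq ?_
  rw [mul_comm]
  congr 2
  ring

end PartitionSums

section AbsolutelyContinuous

variable {d : ℕ} {f : Ed d → ℝ≥0∞} {s r q : ℝ}

local notation "ν" => MeasureTheory.Measure.withDensity (Lam d) f

lemma lqPartitionSum_le (hf : Measurable f) (hs : 1 ≤ s) (hfs : ∫⁻ x, f x ^ s ∂Lam d ≠ ⊤)
    (hq0 : 0 ≤ q) (hqs : q ≤ s) (n : ℕ) :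
    lqPartitionSum d ν q n ≤ ((Lam d).withDensity (fun x => f x ^ s) (Qcube d)).toReal ^ (q / s)
      * ((2 : ℝ) ^ n) ^ (d * (1 - q)) := by
  calc lqPartitionSum d ν q n ≤ ∑ k ∈ idx d n, (ν (dyadicCube d n k)).toReal ^ q :=
        Finset.sum_le_sum_of_subset_of_nonneg (Finset.filter_subset _ _) fun _ _ _ => by positivity
    _ ≤ _ := by
      convert sum_rpow_le_of_le_rpow_mul_Lam_rpow ((Lam d).withDensity fun x => f x ^ s)
        (withDensity_apply_ne_top_of_lintegral_ne_top hfs _) (e := 1 - 1 / s)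
        (a := fun k => (ν (dyadicCube d n k)).toReal) (by linarith) hq0 hqs
        (fun _ _ => ENNReal.toReal_nonneg)
        fun k _ => toReal_withDensity_apply_le hf.aemeasurable hs hfs _ using 3
      field_simp
      ring

lemma toReal_lintegral_rpow_mul_le_lqPartitionSum (hf : Measurable f)
    (hf1 : ∫⁻ x, f x ∂Lam d ≠ ⊤) (hq0 : 0 < q) (hq1 : q < 1) (n : ℕ) :
    (∫⁻ x, f x ^ q ∂Lam d).toReal * ((2 : ℝ) ^ n) ^ (d * (1 - q)) ≤ lqPartitionSum d ν q n := by
  set μq := (Lam d).withDensity fun x => f x ^ q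
  have h2n : (0 : ℝ) < 2 ^ n := by positivity
  have hμq : μq (Qcube d) ≠ ⊤ := withDensity_apply_ne_top_of_lintegral_ne_top
    (lintegral_rpow_ne_top_of_le hf.aemeasurable hq0 hq1.le (by simpa using hf1)) _
  rw [← setLIntegral_univ, ← withDensity_apply _ .univ,
    ← measure_Qcube_of_absolutelyContinuous (withDensity_absolutelyContinuous _ _),
    ← sum_toReal_measure_dyadicCube μq hμq, lqPartitionSum_eq_sum _ hq0, Finset.sum_mul]
  refine Finset.sum_le_sum fun k hk => ?_
  have h := toReal_withDensity_rpow_apply_le hf.aemeasurable hq0 hq1.le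
    (withDensity_apply_ne_top_of_lintegral_ne_top hf1 (dyadicCube d n k))
  rw [toReal_Lam_dyadicCube hk, ← Real.rpow_mul h2n.le] at h
  calc _ ≤ _ := mul_le_mul_of_nonneg_right h (by positivity)
    _ = _ := by
        rw [mul_assoc, ← Real.rpow_add h2n, neg_mul, neg_add_cancel, Real.rpow_zero, mul_one]

lemma toReal_Lam_mul_le_lqPartitionSum_zero (hf : Measurable f) (n : ℕ) :
    (Lam d {x | f x ≠ 0}).toReal * ((2 : ℝ) ^ n) ^ (d : ℝ) ≤ lqPartitionSum d ν 0 n := by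
  set S := {x | f x ≠ 0}
  set P := (idx d n).filter fun k => 0 < ν (dyadicCube d n k)
  have h2n : (0 : ℝ) < 2 ^ n := by positivity
  have key : Lam d S ≤ P.card * ENNReal.ofReal (((2 : ℝ) ^ n) ^ (-(d : ℝ))) :=
    calc Lam d S = ∑ k ∈ idx d n, Lam d (S ∩ dyadicCube d n k) := by
          rw [← Measure.restrict_apply_univ, ← measure_Qcube_of_absolutelyContinuous
            (Measure.absolutelyContinuous_of_le Measure.restrict_le_self),
            ← sum_measure_dyadicCube _ n]
          simp only [Measure.restrict_apply (measurableSet_dyadicCube _ _), inter_comm]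
      _ = ∑ k ∈ P, Lam d (S ∩ dyadicCube d n k) :=
          (Finset.sum_filter_of_ne fun _ _ h =>
            pos_iff_ne_zero.2 fun h0 => h ((withDensity_apply_eq_zero hf).1 h0)).symm
      _ ≤ ∑ k ∈ P, Lam d (dyadicCube d n k) :=
          Finset.sum_le_sum fun _ _ => measure_mono inter_subset_right
      _ = _ := by
          rw [Finset.sum_congr rfl fun k hk => Lam_dyadicCube (Finset.mem_filter.1 hk).1,
            Finset.sum_const, nsmul_eq_mul]
  have h := ENNReal.toReal_mono (by finiteness) key
  rw [ENNReal.toReal_mul, ENNReal.toReal_natCast, ENNReal.toReal_ofReal (by positivity),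
    Real.rpow_neg h2n.le, le_mul_inv_iff₀ (by positivity)] at h
  simpa [lqPartitionSum] using h

lemma exists_pos_mul_le_lqPartitionSum (hf : Measurable f) (hs : 1 ≤ s)
    (hfs : ∫⁻ x, f x ^ s ∂Lam d ≠ ⊤) (hne : ν ≠ 0) (hq0 : 0 ≤ q) :
    ∃ c > 0, ∀ n, c * ((2 : ℝ) ^ n) ^ (d * (1 - q)) ≤ lqPartitionSum d ν q n := by
  have hf1 : ∫⁻ x, f x ∂Lam d ≠ ⊤ := by
    simpa using lintegral_rpow_ne_top_of_le hf.aemeasurable one_pos hs hfs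
  have hf0 : ¬ f =ᵐ[Lam d] 0 := fun h => hne ((withDensity_eq_zero_iff hf.aemeasurable).2 h)
  rcases hq0.eq_or_lt with rfl | hq0
  · refine ⟨_, ENNReal.toReal_pos (fun h => hf0 (ae_iff.2 h)) (measure_ne_top _ _), fun n => ?_⟩
    simpa using toReal_Lam_mul_le_lqPartitionSum_zero hf n
  rcases lt_or_ge q 1 with hq1 | hq1
  · refine ⟨_, ENNReal.toReal_pos (fun h => hf0 ?_) (lintegral_rpow_ne_top_of_le hf.aemeasurable
      hq0 hq1.le (by simpa using hf1)), toReal_lintegral_rpow_mul_le_lqPartitionSum hf hf1 hq0 hq1⟩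
    filter_upwards [(lintegral_eq_zero_iff' (hf.pow_const q).aemeasurable).1 h] with x hx
    simpa [hq0, hq0.not_gt] using hx
  · refine ⟨_, Real.rpow_pos_of_pos (ENNReal.toReal_pos ?_ ?_) q,
      rpow_mul_le_lqPartitionSum (withDensity_apply_ne_top_of_lintegral_ne_top hf1 _) hq1⟩
    · rw [measure_Qcube_of_absolutelyContinuous (withDensity_absolutelyContinuous _ _)]
      exact fun h => hne (Measure.measure_univ_eq_zero.1 h)
    · exact withDensity_apply_ne_top_of_lintegral_ne_top hf1 _

lemma toReal_mul_Lam_rpow_le (hf : Measurable f) (hs : 1 ≤ s) (hfs : ∫⁻ x, f x ^ s ∂Lam d ≠ ⊤)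
    (he : 0 ≤ 1 - 1 / s + r / d) {Q A : Set (Ed d)} (hQ : Q ∈ Ddy d) (hQA : Q ⊆ A) :
    (ν Q).toReal * (Lam d Q).toReal ^ (r / d)
      ≤ ((Lam d).withDensity (fun x => f x ^ s) A).toReal ^ (1 / s)
        * (Lam d A).toReal ^ (1 - 1 / s + r / d) := by
  obtain ⟨m, k', hk', rfl⟩ := mem_Ddy_iff.1 hQ
  have hvol : 0 < (Lam d (dyadicCube d m k')).toReal := by
    rw [toReal_Lam_dyadicCube hk']
    positivity
  calc _ ≤ ((Lam d).withDensity (fun x => f x ^ s) (dyadicCube d m k')).toReal ^ (1 / s)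
        * (Lam d (dyadicCube d m k')).toReal ^ (1 - 1 / s)
        * (Lam d (dyadicCube d m k')).toReal ^ (r / d) := by
        gcongr
        exact toReal_withDensity_apply_le hf.aemeasurable hs hfs _
    _ = ((Lam d).withDensity (fun x => f x ^ s) (dyadicCube d m k')).toReal ^ (1 / s)
        * (Lam d (dyadicCube d m k')).toReal ^ (1 - 1 / s + r / d) := by
        rw [mul_assoc, ← Real.rpow_add hvol]
    _ ≤ _ := by
        gcongr
        · exact withDensity_apply_ne_top_of_lintegral_ne_top hfs _
        · exact measure_ne_top _ _

lemma Jf_le (hf : Measurable f) (hs : 1 ≤ s) (hfs : ∫⁻ x, f x ^ s ∂Lam d ≠ ⊤)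
    (he : 0 ≤ 1 - 1 / s + r / d) {n : ℕ} {k : Fin d → ℤ} (hk : k ∈ idx d n) :
    Jf d ν r (dyadicCube d n k)
      ≤ ((Lam d).withDensity (fun x => f x ^ s) (dyadicCube d n k)).toReal ^ (1 / s)
        * (Lam d (dyadicCube d n k)).toReal ^ (1 - 1 / s + r / d) :=
  csSup_le ⟨_, _, mem_Ddy_iff.2 ⟨n, k, hk, rfl⟩, subset_rfl, rfl⟩ fun _ ⟨_, hQ, hQk, hv⟩ =>
    hv ▸ toReal_mul_Lam_rpow_le hf hs hfs he hQ hQk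

lemma toReal_mul_Lam_rpow_le_Jf (hf : Measurable f) (hs : 1 ≤ s)
    (hfs : ∫⁻ x, f x ^ s ∂Lam d ≠ ⊤) (he : 0 ≤ 1 - 1 / s + r / d) {n : ℕ} {k : Fin d → ℤ}
    (hk : k ∈ idx d n) :
    (ν (dyadicCube d n k)).toReal * (Lam d (dyadicCube d n k)).toReal ^ (r / d)
      ≤ Jf d ν r (dyadicCube d n k) :=
  le_csSup ⟨_, fun _ ⟨_, hQ, hQk, hv⟩ => hv ▸ toReal_mul_Lam_rpow_le hf hs hfs he hQ hQk⟩
    ⟨_, mem_Ddy_iff.2 ⟨n, k, hk, rfl⟩, subset_rfl, rfl⟩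

lemma jPartitionSum_le (hd : 0 < d) (hf : Measurable f) (hs : 1 ≤ s)
    (hfs : ∫⁻ x, f x ^ s ∂Lam d ≠ ⊤) (he : 0 ≤ 1 - 1 / s + r / d) (hq0 : 0 ≤ q)
    (hqs : q ≤ s) (n : ℕ) :
    jPartitionSum d ν r q n ≤ ((Lam d).withDensity (fun x => f x ^ s) (Qcube d)).toReal ^ (q / s)
      * ((2 : ℝ) ^ n) ^ (d * (1 - q) - r * q) := by
  have hJ : ∀ k ∈ idx d n, 0 ≤ Jf d ν r (dyadicCube d n k) := fun k hk =>
    (toReal_mul_Lam_rpow_le_Jf hf hs hfs he hk).trans' (by positivity)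
  calc jPartitionSum d ν r q n ≤ ∑ k ∈ idx d n, Jf d ν r (dyadicCube d n k) ^ q :=
        Finset.sum_le_sum_of_subset_of_nonneg (Finset.filter_subset _ _) fun k hk _ =>
          Real.rpow_nonneg (hJ k hk) q
    _ ≤ _ := by
      convert sum_rpow_le_of_le_rpow_mul_Lam_rpow ((Lam d).withDensity fun x => f x ^ s)
        (withDensity_apply_ne_top_of_lintegral_ne_top hfs _) (e := 1 - 1 / s + r / d)
        (a := fun k => Jf d ν r (dyadicCube d n k)) (by linarith) hq0 hqs hJ
        fun k hk => Jf_le hf hs hfs he hk using 3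
      field_simp
      ring

lemma rpow_mul_lqPartitionSum_le_jPartitionSum (hd : 0 < d) (hf : Measurable f) (hs : 1 ≤ s)
    (hfs : ∫⁻ x, f x ^ s ∂Lam d ≠ ⊤) (he : 0 ≤ 1 - 1 / s + r / d) (hq0 : 0 ≤ q)
    (n : ℕ) : ((2 : ℝ) ^ n) ^ (-(r * q)) * lqPartitionSum d ν q n ≤ jPartitionSum d ν r q n := by
  have hν : ∀ A, ν A ≠ ⊤ := withDensity_apply_ne_top_of_lintegral_ne_top
    (by simpa using lintegral_rpow_ne_top_of_le hf.aemeasurable one_pos hs hfs)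
  have hJ (k) (hk : k ∈ idx d n) :
      (ν (dyadicCube d n k)).toReal * ((2 : ℝ) ^ n) ^ (-r) ≤ Jf d ν r (dyadicCube d n k) := by
    convert toReal_mul_Lam_rpow_le_Jf hf hs hfs he hk using 2
    rw [toReal_Lam_dyadicCube hk, ← Real.rpow_mul (by positivity)]
    field_simp
  rw [lqPartitionSum, jPartitionSum, Finset.mul_sum]
  refine (Finset.sum_le_sum fun k hk => ?_).trans (Finset.sum_le_sum_of_subset_of_nonneg
    (fun k hk => ?_) fun k hk _ => ?_)
  · calc ((2 : ℝ) ^ n) ^ (-(r * q)) * (ν (dyadicCube d n k)).toReal ^ q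
          = ((ν (dyadicCube d n k)).toReal * ((2 : ℝ) ^ n) ^ (-r)) ^ q := by
          rw [Real.mul_rpow ENNReal.toReal_nonneg (by positivity), ← Real.rpow_mul (by positivity),
            mul_comm, neg_mul]
      _ ≤ _ := Real.rpow_le_rpow (by positivity) (hJ k (Finset.mem_filter.1 hk).1) hq0
  · obtain ⟨hk, hνk⟩ := Finset.mem_filter.1 hk
    exact Finset.mem_filter.2 ⟨hk, (hJ k hk).trans_lt' (mul_pos
      (ENNReal.toReal_pos hνk.ne' (hν _)) (by positivity))⟩
  · exact Real.rpow_nonneg ((hJ k (Finset.mem_filter.1 hk).1).trans' (by positivity)) q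

lemma tendsto_betaN (hf : Measurable f) (hs : 1 ≤ s) (hfs : ∫⁻ x, f x ^ s ∂Lam d ≠ ⊤)
    (hne : ν ≠ 0) (hq0 : 0 ≤ q) (hqs : q ≤ s) :
    Tendsto (betaN d ν q) atTop (𝓝 (d * (1 - q))) := by
  obtain ⟨c, hc, hlow⟩ := exists_pos_mul_le_lqPartitionSum hf hs hfs hne hq0
  rw [funext (betaN_eq ν q)]
  exact tendsto_log_div_log_of_le_of_le (tendsto_pow_atTop_atTop_of_one_lt one_lt_two) hc
    (.of_forall hlow) (.of_forall (lqPartitionSum_le hf hs hfs hq0 hqs))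

lemma tendsto_tauN (hd : 0 < d) (hf : Measurable f) (hs : 1 ≤ s)
    (hfs : ∫⁻ x, f x ^ s ∂Lam d ≠ ⊤) (hne : ν ≠ 0) (he : 0 ≤ 1 - 1 / s + r / d) (hq0 : 0 ≤ q)
    (hqs : q ≤ s) :
    Tendsto (tauN d ν r q) atTop (𝓝 (d * (1 - q) - r * q)) := by
  obtain ⟨c, hc, hlow⟩ := exists_pos_mul_le_lqPartitionSum hf hs hfs hne hq0
  rw [funext (tauN_eq ν r q)]
  refine tendsto_log_div_log_of_le_of_le (tendsto_pow_atTop_atTop_of_one_lt one_lt_two) hc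
    (.of_forall fun n => ?_) (.of_forall (jPartitionSum_le hd hf hs hfs he hq0 hqs))
  calc c * ((2 : ℝ) ^ n) ^ (d * (1 - q) - r * q)
      = ((2 : ℝ) ^ n) ^ (-(r * q)) * (c * ((2 : ℝ) ^ n) ^ (d * (1 - q))) := by
        rw [mul_left_comm, ← Real.rpow_add (by positivity), sub_eq_neg_add, add_comm]
    _ ≤ _ := (mul_le_mul_of_nonneg_left (hlow n) (by positivity)).trans
        (rpow_mul_lqPartitionSum_le_jPartitionSum hd hf hs hfs he hq0 n)

end AbsolutelyContinuous

theorem Lq_spectrum_absolutely_continuous_general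
    (d : ℕ) (hd : 0 < d) (f : Ed d → ℝ≥0∞) (hf : Measurable f)
    (s : ℝ) (hs : 1 ≤ s) (hfs : (∫⁻ x, f x ^ s ∂Lam d) < ⊤)
    (ν : Measure (Ed d)) (hν : ν = (Lam d).withDensity f)
    (hne : ν ≠ 0) :
    (∀ q ∈ Set.Icc (0:ℝ) s,
      liminf (betaN d ν q) atTop = (d:ℝ) * (1 - q) ∧
      betaNu d ν q = (d:ℝ) * (1 - q)) ∧
    (∀ r : ℝ, (d:ℝ) / s - d ≤ r → ∀ q ∈ Set.Icc (0:ℝ) s,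
      tauJ d ν r q = (d:ℝ) * (1 - q) - r * q) := by
  subst hν
  refine ⟨fun q hq => ?_, fun r hr q hq => ?_⟩
  · have h := tendsto_betaN hf hs hfs.ne hne hq.1 hq.2
    exact ⟨h.liminf_eq, h.limsup_eq⟩
  · have hd' : (0 : ℝ) < d := by exact_mod_cast hd
    have he : 0 ≤ 1 - 1 / s + r / d := by
      rw [show 1 - 1 / s + r / d = (r - (d / s - d)) / d by field_simp; ring]
      exact div_nonneg (sub_nonneg.2 hr) hd'.le
    exact (tendsto_tauN hd hf hs hfs.ne hne he hq.1 hq.2).limsup_eq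

/-- for a nonzero finite absolutely continuous measure `ν = fΛ` on `𝒬` with
density `f ∈ L^s(Λ)`, `s ≥ 1`, the `L^q`-spectrum exists as a limit and is linear on
`[0,s]`: `β_ν(q) = d(1-q)`; moreover `τ_{J_{ν,r}}(q) = d(1-q) - rq` for `r ≥ d/s - d`. -/
theorem Lq_spectrum_absolutely_continuous
    (d : ℕ) (hd : 0 < d) (f : Ed d → ℝ≥0∞) (hf : Measurable f)
    (s : ℝ) (hs : 1 ≤ s) (hfs : (∫⁻ x, f x ^ s ∂Lam d) < ⊤)
    (ν : Measure (Ed d)) (hν : ν = (Lam d).withDensity f)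
    (hne : ν ≠ 0) [IsFiniteMeasure ν] :
    (∀ q ∈ Set.Icc (0:ℝ) s,
      liminf (betaN d ν q) atTop = (d:ℝ) * (1 - q) ∧
      betaNu d ν q = (d:ℝ) * (1 - q)) ∧
    (∀ r : ℝ, (d:ℝ) / s - d ≤ r → ∀ q ∈ Set.Icc (0:ℝ) s,
      tauJ d ν r q = (d:ℝ) * (1 - q) - r * q) :=
  Lq_spectrum_absolutely_continuous_general d hd f hf s hs hfs ν hν hne
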